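/- arXiv:0709.3152 — 5 statements merged into one kernel-verified Lean document; each statement's English description precedes it below -/
import Mathlib

section
/- Fix real numbers r > 0 and F > 0, and set t_c = (2/3)√(r³/F). Define R : [0, t_c) → ℝ by R(t) = r·(1 − t/t_c)^{2/3}. Then R(0) = r, R(t) > 0 on [0, t_c), R is differentiable on [0, t_c) with dR/dt = −√(F/R(t)) there, R(t)³ = (9/4)·F·(t_c − t)² for all t ∈ [0, t_c), and R(t) → 0 as t → t_c⁻. -/
/-!
With `τ = t_c` the definition of `t_c` says `9 F τ² = 4 r³`. In terms of
`v = (1 - t/τ)^{1/3}` one has `R = r v²`, `dR/dt = -(2r/3τ) v⁻¹` by the chain rule, and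
`F / R = 4 r³ / (9 τ² r v²) = (2r/3τ v)²`, which gives the evolution equation; likewise
`R³ = r³ (1 - t/τ)² = (9/4) F (τ - t)²`.
-/

open Real Filter Topology

theorem hasDerivAt_const_mul_one_sub_div_rpow {t : ℝ} (r τ p : ℝ) (ht : 1 - t / τ ≠ 0) :
    HasDerivAt (fun s => r * (1 - s / τ) ^ p) (r * (-(1 / τ) * p * (1 - t / τ) ^ (p - 1))) t := by
  have hinner : HasDerivAt (fun s : ℝ => 1 - s / τ) (-(1 / τ)) t := by
    simpa using ((hasDerivAt_id t).div_const τ).const_sub 1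
  exact (hinner.rpow_const (Or.inl ht)).const_mul r

theorem tendsto_const_mul_one_sub_div_rpow {τ p : ℝ} (r : ℝ) (hτ : τ ≠ 0) (hp : 0 < p) :
    Tendsto (fun s => r * (1 - s / τ) ^ p) (𝓝 τ) (𝓝 0) := by
  have hcont : ContinuousAt (fun s => r * (1 - s / τ) ^ p) τ :=
    continuousAt_const.mul <|
      (continuous_const.sub (continuous_id.div_const τ)).continuousAt.rpow_const (Or.inr hp.le)
  simpa [div_self hτ, zero_rpow hp.ne'] using hcont.tendsto

theorem one_sub_div_pos {τ t : ℝ} (hτ : 0 < τ) (ht : t < τ) : 0 < 1 - t / τ :=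
  sub_pos.2 ((div_lt_one hτ).2 ht)

noncomputable def collapseRadius (r τ t : ℝ) : ℝ :=
  r * (1 - t / τ) ^ ((2 : ℝ) / 3)

namespace collapseRadius

variable {r τ t F : ℝ}

theorem zero_right (r τ : ℝ) : collapseRadius r τ 0 = r := by
  simp [collapseRadius]

theorem pos (hr : 0 < r) (hτ : 0 < τ) (ht : t < τ) : 0 < collapseRadius r τ t :=
  mul_pos hr (rpow_pos_of_pos (one_sub_div_pos hτ ht) _)

theorem hasDerivAt (hr : 0 < r) (hτ : 0 < τ) (ht : t < τ)
    (hFτ : 9 * F * τ ^ 2 = 4 * r ^ 3) :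
    HasDerivAt (collapseRadius r τ) (-√(F / collapseRadius r τ t)) t := by
  have hu := one_sub_div_pos hτ ht
  refine (hasDerivAt_const_mul_one_sub_div_rpow r τ _ hu.ne').congr_deriv ?_
  set v := (1 - t / τ) ^ ((1 : ℝ) / 3) with hv_def
  have hv : 0 < v := rpow_pos_of_pos hu _
  have hsq : (1 - t / τ) ^ ((2 : ℝ) / 3) = v ^ 2 := by
    rw [hv_def, ← rpow_natCast, ← rpow_mul hu.le]; norm_num
  have hinv : (1 - t / τ) ^ ((2 : ℝ) / 3 - 1) = v⁻¹ := by
    rw [hv_def, ← rpow_neg hu.le]; norm_num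
  have hF : F / (r * v ^ 2) = (2 * r / (3 * τ * v)) ^ 2 := by
    field_simp
    linear_combination hFτ
  rw [collapseRadius, hsq, hinv, hF, sqrt_sq (by positivity)]
  field_simp

theorem pow_three (hτ : 0 < τ) (ht : t ≤ τ) (hFτ : 9 * F * τ ^ 2 = 4 * r ^ 3) :
    collapseRadius r τ t ^ 3 = 9 / 4 * F * (τ - t) ^ 2 := by
  have hu : 0 ≤ 1 - t / τ := sub_nonneg.2 ((div_le_one hτ).2 ht)
  rw [collapseRadius, mul_pow, ← rpow_natCast ((1 - t / τ) ^ ((2 : ℝ) / 3)) 3, ← rpow_mul hu]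
  norm_num
  field_simp
  linear_combination -(τ - t) ^ 2 * hFτ

theorem tendsto_zero (r : ℝ) (hτ : τ ≠ 0) : Tendsto (collapseRadius r τ) (𝓝 τ) (𝓝 0) :=
  tendsto_const_mul_one_sub_div_rpow r hτ (by norm_num)

end collapseRadius

/-- The marginally bound collapsing solution: with `t_c = (2/3)√(r³/F)` and
`R(t) = r(1 - t/t_c)^{2/3}`, one has `R(0) = r`, `R > 0` on `[0, t_c)`,
`dR/dt = -√(F/R)` there, `R³ = (9/4)F(t_c - t)²`, and `R → 0` as `t → t_c⁻`. -/
theorem marginally_bound_solution (r F : ℝ) (hr : 0 < r) (hF : 0 < F)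
    (t_c : ℝ) (ht_c : t_c = 2 / 3 * Real.sqrt (r ^ 3 / F))
    (R : ℝ → ℝ) (hR : ∀ t, R t = r * (1 - t / t_c) ^ ((2 : ℝ) / 3)) :
    R 0 = r ∧
    (∀ t ∈ Set.Ico 0 t_c, 0 < R t) ∧
    (∀ t ∈ Set.Ico 0 t_c, HasDerivAt R (-Real.sqrt (F / R t)) t) ∧
    (∀ t ∈ Set.Ico 0 t_c, R t ^ 3 = 9 / 4 * F * (t_c - t) ^ 2) ∧
    Filter.Tendsto R (nhdsWithin t_c (Set.Iio t_c)) (nhds 0) := by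
  have hτ : 0 < t_c := by rw [ht_c]; positivity
  have hFτ : 9 * F * t_c ^ 2 = 4 * r ^ 3 := by
    rw [ht_c, mul_pow, sq_sqrt (by positivity)]
    field_simp
    ring
  obtain rfl : R = collapseRadius r t_c := funext hR
  exact ⟨collapseRadius.zero_right r t_c,
    fun t ht => collapseRadius.pos hr hτ ht.2,
    fun t ht => collapseRadius.hasDerivAt hr hτ ht.2 hFτ,
    fun t ht => collapseRadius.pow_three hτ ht.2.le hFτ,
    (collapseRadius.tendsto_zero r hτ.ne').mono_left nhdsWithin_le_nhds⟩
end

section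
/- Let F : (0,∞) → (0,∞) be differentiable, t_c(r) = (2/3)√(r³/F(r)), and R(t,r) = r·(1 − t/t_c(r))^{2/3}. Then for every r > 0 and every t with 0 < t < t_c(r), ∂R/∂r(t,r) − R(t,r)/r = (2rt·t_c′(r)/(3 t_c(r)²))·(1 − t/t_c(r))^{−1/3}. In particular, for 0 < t < t_c(r), ∂R/∂r(t,r) ≥ R(t,r)/r if and only if t_c′(r) ≥ 0. -/
/-- With `t_c(r) = (2/3)√(r³/F(r))` and `R(t,r) = r(1 - t/t_c(r))^{2/3}`,
for `0 < t < t_c(r)` one has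
`∂R/∂r - R/r = (2rt·t_c'/(3t_c²))·(1 - t/t_c)^{-1/3}`; in particular
`∂R/∂r ≥ R/r` iff `t_c'(r) ≥ 0`. -/
theorem no_shell_crossing_bound_iff (F : ℝ → ℝ)
    (hFpos : ∀ r > (0 : ℝ), 0 < F r)
    (hFdiff : ∀ r > (0 : ℝ), DifferentiableAt ℝ F r)
    (t_c : ℝ → ℝ)
    (ht_c : ∀ r, t_c r = 2 / 3 * Real.sqrt (r ^ 3 / F r))
    (R : ℝ → ℝ → ℝ)
    (hR : ∀ t r, R t r = r * (1 - t / t_c r) ^ ((2 : ℝ) / 3)) :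
    ∀ r > (0 : ℝ), ∀ t : ℝ, 0 < t → t < t_c r →
      (deriv (fun r' => R t r') r - R t r / r =
        2 * r * t * deriv t_c r / (3 * t_c r ^ 2)
          * (1 - t / t_c r) ^ (-(1 : ℝ) / 3)) ∧
      (R t r / r ≤ deriv (fun r' => R t r') r ↔ 0 ≤ deriv t_c r) := by
  intro r hr t ht htc
  have hfun : t_c = fun r' => 2 / 3 * Real.sqrt (r' ^ 3 / F r') := funext ht_c
  -- positivity of t_c r
  have hFr := hFpos r hr
  have hcpos : 0 < t_c r := lt_trans ht htc
  have hcne : t_c r ≠ 0 := ne_of_gt hcpos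
  -- t_c differentiable at r
  have hdiff : DifferentiableAt ℝ t_c r := by
    rw [hfun]
    have hu : DifferentiableAt ℝ (fun r' => r' ^ 3 / F r') r :=
      (differentiableAt_pow 3).div (hFdiff r hr) (ne_of_gt hFr)
    have hune : (fun r' => r' ^ 3 / F r') r ≠ 0 := by
      simp only
      positivity
    exact (hu.sqrt hune).const_mul _
  set c' := deriv t_c r with hc'
  have htc' : HasDerivAt t_c c' r := hdiff.hasDerivAt
  -- derivative of g r' = 1 - t / t_c r'
  have hg : HasDerivAt (fun r' => 1 - t / t_c r')
      (-((0 * t_c r - t * c') / t_c r ^ 2)) r :=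
    ((hasDerivAt_const r t).div htc' hcne).const_sub 1
  have hgpos : 0 < 1 - t / t_c r := by
    have : t / t_c r < 1 := (div_lt_one hcpos).mpr htc
    linarith
  have hgne : (1 - t / t_c r) ≠ 0 := ne_of_gt hgpos
  -- derivative of the power
  have hpow : HasDerivAt (fun r' => (1 - t / t_c r') ^ ((2 : ℝ) / 3))
      (-((0 * t_c r - t * c') / t_c r ^ 2) * ((2 : ℝ) / 3)
        * (1 - t / t_c r) ^ ((2 : ℝ) / 3 - 1)) r :=
    hg.rpow_const (Or.inl hgne)
  have hf : HasDerivAt (fun r' => r' * (1 - t / t_c r') ^ ((2 : ℝ) / 3))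
      (1 * (1 - t / t_c r) ^ ((2 : ℝ) / 3)
        + r * (-((0 * t_c r - t * c') / t_c r ^ 2) * ((2 : ℝ) / 3)
          * (1 - t / t_c r) ^ ((2 : ℝ) / 3 - 1))) r :=
    (hasDerivAt_id r).mul hpow
  have hderiv : deriv (fun r' => R t r') r =
      1 * (1 - t / t_c r) ^ ((2 : ℝ) / 3)
        + r * (-((0 * t_c r - t * c') / t_c r ^ 2) * ((2 : ℝ) / 3)
          * (1 - t / t_c r) ^ ((2 : ℝ) / 3 - 1)) := by
    simp only [hR]
    exact hf.deriv
  have hexp : (2 : ℝ) / 3 - 1 = -(1 : ℝ) / 3 := by norm_num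
  have hrne : r ≠ 0 := ne_of_gt hr
  set Q := (1 - t / t_c r) ^ ((2 : ℝ) / 3) with hQ
  set P := (1 - t / t_c r) ^ (-(1 : ℝ) / 3) with hP
  have hPpos : 0 < P := Real.rpow_pos_of_pos hgpos _
  have hRr : R t r / r = Q := by
    rw [hR, mul_div_cancel_left₀ _ hrne]
  have hmain : deriv (fun r' => R t r') r - R t r / r =
      2 * r * t * c' / (3 * t_c r ^ 2) * P := by
    rw [hderiv, hRr, hexp, ← hP]
    field_simp
    ring
  refine ⟨hmain, ?_⟩
  constructor
  · intro hle
    have h0 : 0 ≤ 2 * r * t * c' / (3 * t_c r ^ 2) * P := by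
      rw [← hmain]; linarith
    have h1 : 0 ≤ 2 * r * t * c' / (3 * t_c r ^ 2) := by
      by_contra hneg
      push_neg at hneg
      nlinarith
    by_contra hneg
    push_neg at hneg
    have hnum : 2 * r * t * c' < 0 :=
      mul_neg_of_pos_of_neg (by positivity : (0:ℝ) < 2 * r * t) hneg
    have := div_neg_of_neg_of_pos hnum (by positivity : (0:ℝ) < 3 * t_c r ^ 2)
    linarith
  · intro hc'0
    have h1 : 0 ≤ 2 * r * t * c' / (3 * t_c r ^ 2) * P := by
      have : 0 ≤ 2 * r * t * c' := by positivity
      positivity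
    linarith [hmain]
end

section
/- Let A, B₁, B₂, C : ℝ → ℝ be differentiable, let W(r,x,y) = A(r)(x²+y²) + B₁(r)x + B₂(r)y + C(r), and suppose W(r,x,y) > 0. Define ν = −log W and the polynomials Q₁ = (AB₁′ − A′B₁)(x² − y²) + 2(AB₂′ − A′B₂)xy + 2(AC′ − A′C)x + (B₁B₂′ − B₁′B₂)y + (B₁C′ − B₁′C) and Q₂ = (AB₂′ − A′B₂)(y² − x²) + 2(AB₁′ − A′B₁)xy + 2(AC′ − A′C)y + (B₂B₁′ − B₂′B₁)x + (B₂C′ − B₂′C), with all functions evaluated at r and primes denoting d/dr. Then at every point where W > 0, ∂²ν/∂r∂x = Q₁/W² and ∂²ν/∂r∂y = Q₂/W². In particular, both mixed partials ∂²ν/∂r∂x and ∂²ν/∂r∂y vanish at (r,x,y) if and only if Q₁ = 0 and Q₂ = 0 there. -/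
/-! Differentiating `ν = -log W` in `x` gives `-W_x / W`, and the quotient rule in `r` gives
`∂²ν/∂r∂x = (W_x W_r - W W_rx) / W²`; for the quadratic `W` the numerator expands to `Q₁`.
Interchanging `(B₁, x)` with `(B₂, y)` fixes `W` and turns `Q₁` into `Q₂`. -/

open Filter Topology

theorem hasDerivAt_deriv_neg_log {f : ℝ → ℝ → ℝ} {g : ℝ → ℝ} {r x fr g' : ℝ}
    (hfx : ∀ᶠ r' in 𝓝 r, HasDerivAt (f r') (g r') x)
    (hf0 : ∀ᶠ r' in 𝓝 r, f r' x ≠ 0)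
    (hfr : HasDerivAt (fun r' => f r' x) fr r) (hg : HasDerivAt g g' r) :
    HasDerivAt (fun r' => deriv (fun x' => -Real.log (f r' x')) x)
      ((g r * fr - f r x * g') / f r x ^ 2) r := by
  have hinner : (fun r' => deriv (fun x' => -Real.log (f r' x')) x) =ᶠ[𝓝 r]
      fun r' => -(g r' / f r' x) :=
    (hfx.and hf0).mono fun r' h => ((h.1.log h.2).neg).deriv
  have hquot := (hg.fun_div hfr hf0.self_of_nhds).fun_neg
  rw [show (g r * fr - f r x * g') / f r x ^ 2 = -((g' * f r x - g r * fr) / f r x ^ 2) by ring]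
  exact hquot.congr_of_eventuallyEq hinner

namespace Szekeres

variable (A B₁ B₂ C : ℝ → ℝ)

def W (r x y : ℝ) : ℝ := A r * (x ^ 2 + y ^ 2) + B₁ r * x + B₂ r * y + C r

noncomputable def Q (r x y : ℝ) : ℝ :=
  (A r * deriv B₁ r - deriv A r * B₁ r) * (x ^ 2 - y ^ 2)
    + 2 * (A r * deriv B₂ r - deriv A r * B₂ r) * x * y
    + 2 * (A r * deriv C r - deriv A r * C r) * x
    + (B₁ r * deriv B₂ r - deriv B₁ r * B₂ r) * y
    + (B₁ r * deriv C r - deriv B₁ r * C r)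

theorem W_swap (r x y : ℝ) : W A B₁ B₂ C r x y = W A B₂ B₁ C r y x := by
  simp only [W]
  ring

theorem hasDerivAt_W_x (r x y : ℝ) :
    HasDerivAt (fun x' => W A B₁ B₂ C r x' y) (2 * A r * x + B₁ r) x := by
  have h := ((((hasDerivAt_pow 2 x).add_const (y ^ 2)).const_mul (A r)).add
    ((hasDerivAt_id x).const_mul (B₁ r))).add_const (B₂ r * y) |>.add_const (C r)
  exact h.congr_deriv (by norm_num; ring)

variable {A B₁ B₂ C}

theorem hasDerivAt_W_r {r x y : ℝ} (hA : DifferentiableAt ℝ A r)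
    (hB₁ : DifferentiableAt ℝ B₁ r) (hB₂ : DifferentiableAt ℝ B₂ r)
    (hC : DifferentiableAt ℝ C r) :
    HasDerivAt (fun r' => W A B₁ B₂ C r' x y)
      (deriv A r * (x ^ 2 + y ^ 2) + deriv B₁ r * x + deriv B₂ r * y + deriv C r) r :=
  (((hA.hasDerivAt.mul_const _).add (hB₁.hasDerivAt.mul_const x)).add
    (hB₂.hasDerivAt.mul_const y)).add hC.hasDerivAt

theorem deriv_deriv_neg_log_W {r x y : ℝ} (hA : DifferentiableAt ℝ A r)
    (hB₁ : DifferentiableAt ℝ B₁ r) (hB₂ : DifferentiableAt ℝ B₂ r)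
    (hC : DifferentiableAt ℝ C r) (hW : ∀ᶠ r' in 𝓝 r, W A B₁ B₂ C r' x y ≠ 0) :
    deriv (fun r' => deriv (fun x' => -Real.log (W A B₁ B₂ C r' x' y)) x) r
      = Q A B₁ B₂ C r x y / W A B₁ B₂ C r x y ^ 2 := by
  have hWxr : HasDerivAt (fun r' => 2 * A r' * x + B₁ r') (2 * deriv A r * x + deriv B₁ r) r :=
    ((hA.hasDerivAt.const_mul 2).mul_const x).add hB₁.hasDerivAt
  rw [(hasDerivAt_deriv_neg_log (.of_forall fun r' => hasDerivAt_W_x A B₁ B₂ C r' x y) hW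
    (hasDerivAt_W_r hA hB₁ hB₂ hC) hWxr).deriv]
  congr 1
  simp only [W, Q]
  ring

end Szekeres

/-- The key computation in Proposition 1: with `ν = -log W` where
`W = A(x²+y²) + B₁x + B₂y + C > 0`, the mixed partials satisfy
`∂²ν/∂r∂x = Q₁/W²` and `∂²ν/∂r∂y = Q₂/W²`, so both vanish iff
`Q₁ = Q₂ = 0`. -/
theorem mixed_partials_eq_Q_over_W_sq (A B₁ B₂ C : ℝ → ℝ)
    (hA : Differentiable ℝ A) (hB₁ : Differentiable ℝ B₁)
    (hB₂ : Differentiable ℝ B₂) (hC : Differentiable ℝ C)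
    (W : ℝ → ℝ → ℝ → ℝ)
    (hW : ∀ r x y, W r x y = A r * (x ^ 2 + y ^ 2) + B₁ r * x + B₂ r * y + C r)
    (hWpos : ∀ r x y, 0 < W r x y)
    (ν : ℝ → ℝ → ℝ → ℝ)
    (hν : ∀ r x y, ν r x y = -Real.log (W r x y))
    (Q₁ Q₂ : ℝ → ℝ → ℝ → ℝ)
    (hQ₁ : ∀ r x y, Q₁ r x y =
      (A r * deriv B₁ r - deriv A r * B₁ r) * (x ^ 2 - y ^ 2)
      + 2 * (A r * deriv B₂ r - deriv A r * B₂ r) * x * y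
      + 2 * (A r * deriv C r - deriv A r * C r) * x
      + (B₁ r * deriv B₂ r - deriv B₁ r * B₂ r) * y
      + (B₁ r * deriv C r - deriv B₁ r * C r))
    (hQ₂ : ∀ r x y, Q₂ r x y =
      (A r * deriv B₂ r - deriv A r * B₂ r) * (y ^ 2 - x ^ 2)
      + 2 * (A r * deriv B₁ r - deriv A r * B₁ r) * x * y
      + 2 * (A r * deriv C r - deriv A r * C r) * y
      + (B₂ r * deriv B₁ r - deriv B₂ r * B₁ r) * x
      + (B₂ r * deriv C r - deriv B₂ r * C r)) :
    ∀ r x y : ℝ,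
      deriv (fun r' => deriv (fun x' => ν r' x' y) x) r = Q₁ r x y / W r x y ^ 2 ∧
      deriv (fun r' => deriv (fun y' => ν r' x y') y) r = Q₂ r x y / W r x y ^ 2 ∧
      ((deriv (fun r' => deriv (fun x' => ν r' x' y) x) r = 0 ∧
        deriv (fun r' => deriv (fun y' => ν r' x y') y) r = 0) ↔
        (Q₁ r x y = 0 ∧ Q₂ r x y = 0)) := by
  intro r x y
  have hWeq : W = Szekeres.W A B₁ B₂ C := funext₃ hW
  subst hWeq
  have hWpos' : ∀ r' x y, 0 < Szekeres.W A B₂ B₁ C r' x y := fun r' x y =>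
    Szekeres.W_swap A B₁ B₂ C r' y x ▸ hWpos r' y x
  have hQ₂' : Q₂ r x y = Szekeres.Q A B₂ B₁ C r y x := by
    rw [hQ₂, Szekeres.Q]
    ring
  have hνx : ∀ r' x', ν r' x' y = -Real.log (Szekeres.W A B₁ B₂ C r' x' y) := (hν · · y)
  have hνy : ∀ r' y', ν r' x y' = -Real.log (Szekeres.W A B₂ B₁ C r' y' x) := by
    intro r' y'
    rw [hν, Szekeres.W_swap]
  have hrx : deriv (fun r' => deriv (fun x' => ν r' x' y) x) r
      = Q₁ r x y / Szekeres.W A B₁ B₂ C r x y ^ 2 := by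
    simp only [hνx, hQ₁]
    exact Szekeres.deriv_deriv_neg_log_W (hA r) (hB₁ r) (hB₂ r) (hC r)
      (.of_forall fun r' => (hWpos r' x y).ne')
  have hry : deriv (fun r' => deriv (fun y' => ν r' x y') y) r
      = Q₂ r x y / Szekeres.W A B₁ B₂ C r x y ^ 2 := by
    simp only [hνy, hQ₂', Szekeres.W_swap A B₁ B₂ C r x y]
    exact Szekeres.deriv_deriv_neg_log_W (hA r) (hB₂ r) (hB₁ r) (hC r)
      (.of_forall fun r' => (hWpos' r' y x).ne')
  have hW2 : Szekeres.W A B₁ B₂ C r x y ^ 2 ≠ 0 := pow_ne_zero 2 (hWpos r x y).ne'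
  refine ⟨hrx, hry, ?_⟩
  rw [hrx, hry, div_eq_zero_iff, div_eq_zero_iff, or_iff_left hW2, or_iff_left hW2]
end

section
/- Let A, C : (0,∞) → ℝ be differentiable with A(r) > 0, A(r)C(r) = 1/4, A(r) − rA′(r) > 0, and A′(r)C′(r) > −1/(4r²) for all r > 0. Then for every r > 0, −1/r < −C′(r)/C(r) < 1/r. -/
/-! `AC = 1/4` forces `ν' = -C'/C = A'/A`, and then `A'C' = -(A'/A)² · AC = -(A'/A)²/4`, so
`A'C' > -1/(4r²)` is exactly `(A'/A)² < 1/r²`. -/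

open Filter Topology

section LogDeriv

variable {𝕜 : Type*} [NontriviallyNormedField 𝕜] {f g : 𝕜 → 𝕜} {x : 𝕜}

theorem logDeriv_eq_neg_of_eventually_mul_eq_const {c : 𝕜} (hc : c ≠ 0)
    (hf : DifferentiableAt 𝕜 f x) (hfg : ∀ᶠ y in 𝓝 x, f y * g y = c) :
    logDeriv g x = -logDeriv f x := by
  have hg : g =ᶠ[𝓝 x] fun y => c * (f y)⁻¹ := hfg.mono fun y hy => by
    show g y = c * (f y)⁻¹
    rw [← hy, mul_comm (f y), mul_inv_cancel_right₀ (left_ne_zero_of_mul (hy ▸ hc))]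
  have hfx : f x ≠ 0 := left_ne_zero_of_mul (hfg.self_of_nhds ▸ hc)
  calc logDeriv g x = logDeriv ((·⁻¹) ∘ f) x :=
        (logDeriv_congr_nhds hg).self_of_nhds.trans (logDeriv_const_mul x c hc)
    _ = -logDeriv f x := by
      rw [logDeriv_comp (differentiableAt_inv hfx) hf, logDeriv_inv, logDeriv_apply]
      ring

theorem deriv_mul_deriv_eq_of_logDeriv_eq_neg (hfx : f x ≠ 0) (hgx : g x ≠ 0)
    (h : logDeriv g x = -logDeriv f x) :
    deriv f x * deriv g x = -logDeriv f x ^ 2 * (f x * g x) := by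
  have hf' : deriv f x = logDeriv f x * f x := (div_mul_cancel₀ _ hfx).symm
  have hg' : deriv g x = -logDeriv f x * g x := by
    rw [← h]; exact (div_mul_cancel₀ _ hgx).symm
  rw [hf', hg']
  ring

end LogDeriv

theorem polar_nu_prime_bound_general (A C : ℝ → ℝ)
    (hAd : ∀ r > (0 : ℝ), DifferentiableAt ℝ A r)
    (hAC : ∀ r > (0 : ℝ), A r * C r = 1 / 4)
    (h2 : ∀ r > (0 : ℝ), -(1 / (4 * r ^ 2)) < deriv A r * deriv C r) :
    ∀ r > (0 : ℝ), -(1 / r) < -deriv C r / C r ∧ -deriv C r / C r < 1 / r := by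
  intro r hr
  have hAC_near : ∀ᶠ y in 𝓝 r, A y * C y = 1 / 4 :=
    eventually_of_mem (Ioi_mem_nhds hr) hAC
  have hlog := logDeriv_eq_neg_of_eventually_mul_eq_const (by norm_num) (hAd r hr) hAC_near
  have hAr : A r ≠ 0 := left_ne_zero_of_mul (by rw [hAC r hr]; norm_num)
  have hCr : C r ≠ 0 := right_ne_zero_of_mul (by rw [hAC r hr]; norm_num)
  have hprod := deriv_mul_deriv_eq_of_logDeriv_eq_neg hAr hCr hlog
  have hsq : logDeriv A r ^ 2 < (1 / r) ^ 2 := by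
    have hcond := h2 r hr
    rw [hprod, hAC r hr] at hcond
    field_simp at hcond ⊢
    linarith
  have hnu : -deriv C r / C r = logDeriv A r := by
    rw [neg_div, ← logDeriv_apply, hlog, neg_neg]
  rw [hnu]
  exact abs_lt.mp (abs_lt_of_sq_lt_sq hsq (by positivity))

/-- The bound (43) of the paper: under the axially symmetric regularity
conditions `A > 0`, `AC = 1/4`, `A - rA' > 0` and `A'C' > -1/(4r²)`,
the polar value `ν'|_γ = -C'/C` satisfies `-1/r < -C'/C < 1/r`. -/
theorem polar_nu_prime_bound (A C : ℝ → ℝ)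
    (hAd : ∀ r > (0 : ℝ), DifferentiableAt ℝ A r)
    (hCd : ∀ r > (0 : ℝ), DifferentiableAt ℝ C r)
    (hApos : ∀ r > (0 : ℝ), 0 < A r)
    (hAC : ∀ r > (0 : ℝ), A r * C r = 1 / 4)
    (h1 : ∀ r > (0 : ℝ), 0 < A r - r * deriv A r)
    (h2 : ∀ r > (0 : ℝ), -(1 / (4 * r ^ 2)) < deriv A r * deriv C r) :
    ∀ r > (0 : ℝ), -(1 / r) < -deriv C r / C r ∧ -deriv C r / C r < 1 / r :=
  polar_nu_prime_bound_general A C hAd hAC h2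
end

section
/- Let f₀ > 0, δ₀ > 0, and let F₁ : [0, δ₀) → ℝ be continuously differentiable with F₁(0) = 0, f₁ := F₁′(0) < 0, and f₀ + F₁(r) > 0 on [0, δ₀). Set λ = −f₁/(3f₀^{3/2}), fix κ with 0 < κ < λ, and define t_κ(r) = (2/3)f₀^{−1/2} + κr, t_c(r) = (2/3)(f₀ + F₁(r))^{−1/2}, and R(t,r) = r·(1 − t/t_c(r))^{2/3}. Then there exists δ > 0 such that for all r ∈ (0, δ): t_κ(r) < t_c(r) and ∂R/∂r(t_κ(r), r) + R(t_κ(r), r)/r < κ. -/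
open Filter Set Topology

/-!
Along the line `t_κ(r) = t_c(0) + κ r` the relative gap `v = 1 - t_κ / t_c` satisfies
`v(r) / r → (t_c'(0) - κ) / t_c(0)`, which is positive because `t_c'(0) = λ > κ`; hence
`t_κ < t_c` near `0`. Differentiating `R = r v^{2/3}` at fixed `t` gives
`∂R/∂r + R/r = v^{2/3} (2 + (2/3) ∂ᵣv / (v / r))` with `∂ᵣv = t t_c' / t_c²` continuous, so the
right side tends to `0 < κ` since `v → 0` while `v / r` stays away from `0`.
-/

theorem HasDerivWithinAt.tendsto_slope_nhdsGT {f : ℝ → ℝ} {f' a b : ℝ} (hab : a < b)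
    (h : HasDerivWithinAt f f' (Ico a b) a) : Tendsto (slope f a) (𝓝[>] a) (𝓝 f') :=
  (hasDerivWithinAt_iff_tendsto_slope' (lt_irrefl a)).1
    (h.mono_of_mem_nhdsWithin (Ico_mem_nhdsGE hab)).Ioi_of_Ici

theorem HasDerivWithinAt.two_div_three_mul_rpow_neg_one_div_two {g : ℝ → ℝ} {g' x : ℝ}
    {s : Set ℝ} (hg : HasDerivWithinAt g g' s x) (hx : 0 < g x) :
    HasDerivWithinAt (fun r => 2 / 3 * g r ^ (-(1 : ℝ) / 2))
      (-g' / (3 * g x ^ ((3 : ℝ) / 2))) s x := by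
  refine ((hg.rpow_const (p := -(1 : ℝ) / 2) (Or.inl hx.ne')).const_mul (2 / 3)).congr_deriv ?_
  rw [show -(1 : ℝ) / 2 - 1 = -((3 : ℝ) / 2) by norm_num, Real.rpow_neg hx.le]
  have : 0 < g x ^ ((3 : ℝ) / 2) := by positivity
  field_simp

theorem hasDerivAt_mul_one_sub_div_rpow {T : ℝ → ℝ} {T' t p r : ℝ} (hT : HasDerivAt T T' r)
    (hTr : T r ≠ 0) (hv : 1 - t / T r ≠ 0) :
    HasDerivAt (fun r' => r' * (1 - t / T r') ^ p)
      ((1 - t / T r) ^ p + r * (t * T' / T r ^ 2 * p * (1 - t / T r) ^ (p - 1))) r := by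
  have hq : HasDerivAt (fun r' => 1 - t / T r') (t * T' / T r ^ 2) r := by
    refine (((hasDerivAt_const r t).div hT hTr).const_sub 1).congr_deriv ?_
    ring
  refine ((hasDerivAt_id r).mul (hq.rpow_const (p := p) (Or.inl hv))).congr_deriv ?_
  simp

theorem deriv_mul_one_sub_div_rpow_add_div {T : ℝ → ℝ} {T' t p r : ℝ} (hT : HasDerivAt T T' r)
    (hTr : T r ≠ 0) (hr : r ≠ 0) (hv : 1 - t / T r ≠ 0) :
    deriv (fun r' => r' * (1 - t / T r') ^ p) r + r * (1 - t / T r) ^ p / r =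
      (1 - t / T r) ^ p * (2 + p * (t * T' / T r ^ 2) / ((1 - t / T r) / r)) := by
  rw [(hasDerivAt_mul_one_sub_div_rpow hT hTr hv).deriv, Real.rpow_sub_one hv]
  field_simp
  ring

theorem tendsto_rpow_mul_two_add_div_nhdsGT {v w : ℝ → ℝ} {c w₀ p : ℝ} (hp : 0 < p) (hc : c ≠ 0)
    (hv : Tendsto (fun r => v r / r) (𝓝[>] 0) (𝓝 c)) (hw : Tendsto w (𝓝[>] 0) (𝓝 w₀)) :
    Tendsto (fun r => v r ^ p * (2 + p * w r / (v r / r))) (𝓝[>] 0) (𝓝 0) := by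
  have hv0 : Tendsto v (𝓝[>] 0) (𝓝 0) := by
    have h := hv.mul (tendsto_nhdsWithin_of_tendsto_nhds (tendsto_id (x := 𝓝 (0 : ℝ))))
    rw [mul_zero] at h
    refine h.congr' ?_
    filter_upwards [self_mem_nhdsWithin] with r (hr : 0 < r)
    exact div_mul_cancel₀ _ hr.ne'
  have hvp : Tendsto (fun r => v r ^ p) (𝓝[>] 0) (𝓝 0) := by
    have h := (Real.continuousAt_rpow_const 0 p (Or.inr hp.le)).tendsto.comp hv0
    rwa [Real.zero_rpow hp.ne'] at h
  simpa using hvp.mul (tendsto_const_nhds.add ((hw.const_mul p).div hv hc))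

theorem eventually_add_mul_lt_and_deriv_add_div_lt {T : ℝ → ℝ} {δ₀ κ p : ℝ} (hδ₀ : 0 < δ₀)
    (hT : ContDiffOn ℝ 1 T (Ico 0 δ₀)) (hT0 : 0 < T 0) (hκ : 0 < κ)
    (hκT : κ < derivWithin T (Ico 0 δ₀) 0) (hp : 0 < p) :
    ∀ᶠ r in 𝓝[>] 0, T 0 + κ * r < T r ∧
      deriv (fun r' => r' * (1 - (T 0 + κ * r) / T r') ^ p) r +
        r * (1 - (T 0 + κ * r) / T r) ^ p / r < κ := by
  set T' := derivWithin T (Ico 0 δ₀)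
  set v : ℝ → ℝ := fun r => 1 - (T 0 + κ * r) / T r
  have h0 : (0 : ℝ) ∈ Ico 0 δ₀ := ⟨le_rfl, hδ₀⟩
  have hIoo : Ioo 0 δ₀ ∈ 𝓝[>] (0 : ℝ) := Ioo_mem_nhdsGT hδ₀
  have hIco : Ico 0 δ₀ ∈ 𝓝[>] (0 : ℝ) := mem_of_superset hIoo Ioo_subset_Ico_self
  have hTlim : Tendsto T (𝓝[>] 0) (𝓝 (T 0)) :=
    ((hT.continuousOn 0 h0).mono_of_mem_nhdsWithin hIco).tendsto
  have hT'lim : Tendsto T' (𝓝[>] 0) (𝓝 (T' 0)) :=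
    ((hT.continuousOn_derivWithin (uniqueDiffOn_Ico 0 δ₀) le_rfl 0 h0).mono_of_mem_nhdsWithin
      hIco).tendsto
  have hTpos : ∀ᶠ r in 𝓝[>] 0, 0 < T r := hTlim.eventually (eventually_gt_nhds hT0)
  have hslope : Tendsto (slope T 0) (𝓝[>] 0) (𝓝 (T' 0)) :=
    (hT.differentiableOn one_ne_zero 0 h0).hasDerivWithinAt.tendsto_slope_nhdsGT hδ₀
  -- the line starts at `T 0`, so `v r / r = (slope T 0 r - κ) / T r`
  have hv : Tendsto (fun r => v r / r) (𝓝[>] 0) (𝓝 ((T' 0 - κ) / T 0)) := by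
    refine ((hslope.sub_const κ).div hTlim hT0.ne').congr' ?_
    filter_upwards [self_mem_nhdsWithin, hTpos] with r (hr : 0 < r) hTr
    simp only [v, slope_def_field, sub_zero, Pi.div_apply]
    field_simp
    ring
  have hc : 0 < (T' 0 - κ) / T 0 := div_pos (sub_pos.2 hκT) hT0
  have ht : Tendsto (fun r => T 0 + κ * r) (𝓝[>] 0) (𝓝 (T 0)) :=
    tendsto_nhdsWithin_of_tendsto_nhds ((continuous_const_mul κ).const_add (T 0) |>.tendsto' 0 _
      (by simp))
  have hsmall := (tendsto_rpow_mul_two_add_div_nhdsGT hp hc.ne' hv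
    ((ht.mul hT'lim).div (hTlim.pow 2) (by positivity))).eventually (eventually_lt_nhds hκ)
  filter_upwards [hIoo, hTpos, hv.eventually (eventually_gt_nhds hc), hsmall]
    with r ⟨hr, hrδ⟩ hTr hvr_div hbound
  have hvr : 0 < v r := by simpa [hr.ne'] using (div_pos_iff_of_pos_right hr).1 hvr_div
  refine ⟨by simpa [v, sub_pos, div_lt_one hTr] using hvr, ?_⟩
  have hTd : HasDerivAt T (T' r) r := (hT.differentiableOn one_ne_zero r ⟨hr.le, hrδ⟩
    ).hasDerivWithinAt.hasDerivAt (Ico_mem_nhds hr hrδ)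
  rwa [deriv_mul_one_sub_div_rpow_add_div hTd hTr.ne' hr.ne' hvr.ne']

theorem naked_singularity_geodesic_bound_general (f₀ δ₀ : ℝ)
    (hf₀ : 0 < f₀) (hδ₀ : 0 < δ₀) (F₁ : ℝ → ℝ)
    (hF₁ : ContDiffOn ℝ 1 F₁ (Set.Ico 0 δ₀)) (hF₁0 : F₁ 0 = 0)
    (f₁ : ℝ) (hf₁def : derivWithin F₁ (Set.Ico 0 δ₀) 0 = f₁)
    (hpos : ∀ r ∈ Set.Ico (0 : ℝ) δ₀, 0 < f₀ + F₁ r)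
    (lam κ : ℝ) (hlam : lam = -f₁ / (3 * f₀ ^ ((3 : ℝ) / 2)))
    (hκ : 0 < κ) (hκlam : κ < lam)
    (t_κ t_c : ℝ → ℝ)
    (ht_κ : ∀ r, t_κ r = 2 / 3 * f₀ ^ (-(1 : ℝ) / 2) + κ * r)
    (ht_c : ∀ r, t_c r = 2 / 3 * (f₀ + F₁ r) ^ (-(1 : ℝ) / 2))
    (R : ℝ → ℝ → ℝ)
    (hR : ∀ t r, R t r = r * (1 - t / t_c r) ^ ((2 : ℝ) / 3)) :
    ∃ δ > (0 : ℝ), ∀ r ∈ Set.Ioo (0 : ℝ) δ,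
      t_κ r < t_c r ∧
      deriv (fun r' => R (t_κ r) r') r + R (t_κ r) r / r < κ := by
  have htc : t_c = fun r => 2 / 3 * (f₀ + F₁ r) ^ (-(1 : ℝ) / 2) := funext ht_c
  have htc0 : t_c 0 = 2 / 3 * f₀ ^ (-(1 : ℝ) / 2) := by rw [ht_c, hF₁0, add_zero]
  have hg : ContDiffOn ℝ 1 (fun r => f₀ + F₁ r) (Ico 0 δ₀) := contDiffOn_const.add hF₁
  have hsmooth : ContDiffOn ℝ 1 t_c (Ico 0 δ₀) :=
    htc ▸ contDiffOn_const.mul (hg.rpow_const_of_ne fun r hr => (hpos r hr).ne')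
  have hslope : derivWithin t_c (Ico 0 δ₀) 0 = lam := by
    have h0 : (0 : ℝ) ∈ Ico 0 δ₀ := ⟨le_rfl, hδ₀⟩
    have hg0 : HasDerivWithinAt (fun r => f₀ + F₁ r) f₁ (Ico 0 δ₀) 0 :=
      hf₁def ▸ (hF₁.differentiableOn one_ne_zero 0 h0).hasDerivWithinAt.const_add f₀
    rw [htc, (hg0.two_div_three_mul_rpow_neg_one_div_two (by simpa [hF₁0] using hf₀)).derivWithin
      (uniqueDiffOn_Ico 0 δ₀ 0 h0), hlam, hF₁0, add_zero]
  obtain ⟨δ, hδ, hsub⟩ := mem_nhdsGT_iff_exists_Ioo_subset.1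
    (eventually_add_mul_lt_and_deriv_add_div_lt hδ₀ hsmooth (htc0 ▸ by positivity) hκ
      (hslope ▸ hκlam) (by norm_num : (0 : ℝ) < 2 / 3))
  refine ⟨δ, hδ, fun r hr => ?_⟩
  simpa only [hR, htc0, ← ht_κ, mem_ofPred_eq] using hsub hr

/-- Analytic core of Proposition 5: with `t_c(r) = (2/3)(f₀+F₁(r))^{-1/2}`,
`R(t,r) = r(1 - t/t_c(r))^{2/3}`, `f₁ = F₁'(0) < 0`, `λ = -f₁/(3f₀^{3/2})`
and `0 < κ < λ`, there is `δ > 0` such that for `0 < r < δ` the line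
`t_κ(r) = (2/3)f₀^{-1/2} + κr` lies below `t_c`, and along it
`∂R/∂r + R/r < κ`. -/
theorem naked_singularity_geodesic_bound (f₀ δ₀ : ℝ)
    (hf₀ : 0 < f₀) (hδ₀ : 0 < δ₀) (F₁ : ℝ → ℝ)
    (hF₁ : ContDiffOn ℝ 1 F₁ (Set.Ico 0 δ₀)) (hF₁0 : F₁ 0 = 0)
    (f₁ : ℝ) (hf₁def : derivWithin F₁ (Set.Ico 0 δ₀) 0 = f₁) (hf₁ : f₁ < 0)
    (hpos : ∀ r ∈ Set.Ico (0 : ℝ) δ₀, 0 < f₀ + F₁ r)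
    (lam κ : ℝ) (hlam : lam = -f₁ / (3 * f₀ ^ ((3 : ℝ) / 2)))
    (hκ : 0 < κ) (hκlam : κ < lam)
    (t_κ t_c : ℝ → ℝ)
    (ht_κ : ∀ r, t_κ r = 2 / 3 * f₀ ^ (-(1 : ℝ) / 2) + κ * r)
    (ht_c : ∀ r, t_c r = 2 / 3 * (f₀ + F₁ r) ^ (-(1 : ℝ) / 2))
    (R : ℝ → ℝ → ℝ)
    (hR : ∀ t r, R t r = r * (1 - t / t_c r) ^ ((2 : ℝ) / 3)) :
    ∃ δ > (0 : ℝ), ∀ r ∈ Set.Ioo (0 : ℝ) δ,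
      t_κ r < t_c r ∧
      deriv (fun r' => R (t_κ r) r') r + R (t_κ r) r / r < κ :=
  naked_singularity_geodesic_bound_general f₀ δ₀ hf₀ hδ₀ F₁ hF₁ hF₁0 f₁ hf₁def hpos lam κ hlam hκ
    hκlam t_κ t_c ht_κ ht_c R hR
end
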